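/- Let Ω be the curvature matrix of a connection ∇ on an even-rank oriented vector bundle E with metric g, computed in local g-orthonormal positively oriented frames. Then the local expressions (2π)^{-n} Pf((Ω - Ωᵀ)/2) agree on overlaps of such frames (whose transition matrices lie in SO(n)), hence define a global differential form on the base manifold. -/

import Mathlib

open Matrix
/-- Index of the first element of the `i`-th pair. -/
def pairLo {m : ℕ} (i : Fin m) : Fin (2 * m) := ⟨2 * i.1, by omega⟩

/-- Index of the second element of the `i`-th pair. -/
def pairHi {m : ℕ} (i : Fin m) : Fin (2 * m) := ⟨2 * i.1 + 1, by omega⟩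

/-- Permutations of `Fin (2m)` encoding partitions of `{1,…,2m}` into pairs
(each pair listed increasingly, pairs listed by increasing first element). -/
noncomputable def pairPartitions (m : ℕ) : Finset (Equiv.Perm (Fin (2 * m))) :=
  Finset.univ.filter fun σ =>
    (∀ i : Fin m, σ (pairLo i) < σ (pairHi i)) ∧
      ∀ i j : Fin m, i < j → σ (pairLo i) < σ (pairLo j)

/-- The Pfaffian of a `2m × 2m` matrix, as the signed sum over pair partitions
`Pf(A) = Σ_α sgn(α) a_{i₁j₁}⋯a_{iₘjₘ}` (products taken in order, so that the
definition also makes sense with entries in a possibly noncommutative ring,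
e.g. even-degree differential forms). -/
noncomputable def pfaffian {R : Type*} [Ring R] {m : ℕ}
    (A : Matrix (Fin (2 * m)) (Fin (2 * m)) R) : R :=
  ∑ σ ∈ pairPartitions m,
    ((Equiv.Perm.sign σ : ℤˣ) : ℤ) • (List.ofFn fun i : Fin m => A (σ (pairLo i)) (σ (pairHi i))).prod

/-! The Pfaffian of a skew matrix `A` is `1 / (2^m m!)` times the signed sum, over all permutations
`σ`, of `∏ᵢ A (σ (2i)) (σ (2i+1))`: the hyperoctahedral group (flips inside pairs and permutations
of the pairs) acts freely on permutations by right multiplication, the pair partitions form a set of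
orbit representatives, and skewness makes each signed summand constant along orbits. Like the
Leibniz formula for the determinant, this full sum picks up a factor `det U` under `A ↦ Uᵀ A U`,
so `Pf (Uᵀ A U) = det U • Pf A` after cancelling `2^m m!` in the torsion-free ring `R`. Taking the
skew part `(Ω - Ωᵀ) / 2` commutes with `Ω ↦ Uᵀ Ω U`, and `det U = 1`. -/

open Equiv Finset

section PairIndexing

variable {m : ℕ}

lemma pairLo_lt_pairHi (i : Fin m) : pairLo i < pairHi i := by
  simp [pairLo, pairHi, Fin.lt_def]

def pairEquiv (m : ℕ) : Fin (2 * m) ≃ Fin m × Bool where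
  toFun x := (⟨x.1 / 2, by omega⟩, decide (x.1 % 2 = 1))
  invFun p := if p.2 then pairHi p.1 else pairLo p.1
  left_inv x := by
    by_cases h : x.1 % 2 = 1 <;> simp [h, pairLo, pairHi, Fin.ext_iff] <;> omega
  right_inv p := by
    rcases p with ⟨i, _ | _⟩ <;> simp [pairLo, pairHi, Prod.ext_iff, Fin.ext_iff]; omega

@[simp] lemma pairEquiv_pairLo (i : Fin m) : pairEquiv m (pairLo i) = (i, false) := by
  simp [pairEquiv, pairLo]

@[simp] lemma pairEquiv_pairHi (i : Fin m) : pairEquiv m (pairHi i) = (i, true) := by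
  simp [pairEquiv, pairHi, Fin.ext_iff]
  omega

@[simp] lemma pairEquiv_symm_false (i : Fin m) : (pairEquiv m).symm (i, false) = pairLo i := rfl

@[simp] lemma pairEquiv_symm_true (i : Fin m) : (pairEquiv m).symm (i, true) = pairHi i := rfl

lemma prod_eq_prod_pairLo_mul_pairHi {M : Type*} [CommMonoid M] (f : Fin (2 * m) → M) :
    ∏ x, f x = ∏ i : Fin m, f (pairLo i) * f (pairHi i) := by
  rw [← (pairEquiv m).symm.prod_comp f, Fintype.prod_prod_type]
  simp [mul_comm]

def pairArrowEquiv (β : Type*) : (Fin (2 * m) → β) ≃ (Fin m → β × β) :=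
  ((pairEquiv m).arrowCongr (Equiv.refl β)).trans <|
    (Equiv.curry _ _ _).trans (Equiv.piCongrRight fun _ => Equiv.boolArrowEquivProd β)

@[simp] lemma pairArrowEquiv_apply {β : Type*} (τ : Fin (2 * m) → β) (i : Fin m) :
    pairArrowEquiv β τ i = (τ (pairLo i), τ (pairHi i)) := rfl

end PairIndexing

lemma Fintype.sum_fun_eq_sum_perm {n M : Type*} [Fintype n] [DecidableEq n] [AddCommMonoid M]
    (f : (n → n) → M) (hf : ∀ p, ¬ Function.Bijective p → f p = 0) :
    ∑ p, f p = ∑ σ : Perm n, f σ := by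
  rw [← Finset.sum_filter_of_ne fun p _ hp => not_not.1 (mt (hf p) hp)]
  exact (Finset.sum_bij (fun (σ : Perm n) _ => (σ : n → n))
    (fun σ _ => mem_filter.2 ⟨mem_univ _, σ.bijective⟩)
    (fun _ _ _ _ h => coe_fn_injective h)
    (fun p hp => ⟨.ofBijective p (mem_filter.1 hp).2, mem_univ _, rfl⟩) fun _ _ => rfl).symm

section Conjugation

variable {m : ℕ} {R : Type*} [CommRing R]

def pairMonomial (A : Matrix (Fin (2 * m)) (Fin (2 * m)) R) (τ : Fin (2 * m) → Fin (2 * m)) : R :=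
  ∏ i : Fin m, A (τ (pairLo i)) (τ (pairHi i))

noncomputable def permPfaffian (A : Matrix (Fin (2 * m)) (Fin (2 * m)) R) : R :=
  ∑ σ : Perm (Fin (2 * m)), Perm.sign σ • pairMonomial A σ

lemma pairMonomial_transpose_mul_mul (U A : Matrix (Fin (2 * m)) (Fin (2 * m)) R)
    (x : Fin (2 * m) → Fin (2 * m)) :
    pairMonomial (Uᵀ * A * U) x = ∑ τ, pairMonomial A τ * ∏ j, U (τ j) (x j) := by
  have entry : ∀ a b, (Uᵀ * A * U) a b = ∑ kl : Fin (2 * m) × Fin (2 * m),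
      U kl.1 a * A kl.1 kl.2 * U kl.2 b := fun a b => by
    simp only [mul_apply, transpose_apply, Finset.sum_mul]
    rw [Finset.sum_comm, Fintype.sum_prod_type]
  calc pairMonomial (Uᵀ * A * U) x
      = ∑ f : Fin m → Fin (2 * m) × Fin (2 * m), ∏ i,
          U (f i).1 (x (pairLo i)) * A (f i).1 (f i).2 * U (f i).2 (x (pairHi i)) := by
        simp only [pairMonomial, entry, Finset.prod_univ_sum, Fintype.piFinset_univ]
    _ = ∑ τ : Fin (2 * m) → Fin (2 * m), ∏ i, U (τ (pairLo i)) (x (pairLo i)) *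
          A (τ (pairLo i)) (τ (pairHi i)) * U (τ (pairHi i)) (x (pairHi i)) := by
        rw [← (pairArrowEquiv _).sum_comp]
        simp only [pairArrowEquiv_apply]
    _ = ∑ τ, pairMonomial A τ * ∏ j, U (τ j) (x j) := by
        refine Finset.sum_congr rfl fun τ _ => ?_
        rw [pairMonomial, prod_eq_prod_pairLo_mul_pairHi, ← Finset.prod_mul_distrib]
        exact Finset.prod_congr rfl fun i _ => by ring

lemma permPfaffian_transpose_mul_mul (U A : Matrix (Fin (2 * m)) (Fin (2 * m)) R) :
    permPfaffian (Uᵀ * A * U) = U.det * permPfaffian A := by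
  calc permPfaffian (Uᵀ * A * U)
      = ∑ τ, pairMonomial A τ * (Uᵀ.submatrix id τ).det := by
        simp only [permPfaffian, pairMonomial_transpose_mul_mul, Finset.smul_sum, det_apply,
          Finset.mul_sum, mul_smul_comm]
        exact Finset.sum_comm
    _ = ∑ σ : Perm (Fin (2 * m)), pairMonomial A σ * (Uᵀ.submatrix id σ).det := by
        refine Fintype.sum_fun_eq_sum_perm _ fun τ hτ => ?_
        obtain ⟨i, j, hij, hne⟩ := Function.not_injective_iff.1
          (mt Finite.injective_iff_bijective.1 hτ)
        rw [det_zero_of_column_eq hne fun k => by simp [hij], mul_zero]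
    _ = U.det * permPfaffian A := by
        simp only [permPfaffian, det_permute', det_transpose, Finset.mul_sum, Units.smul_def,
          zsmul_eq_mul]
        exact Finset.sum_congr rfl fun σ _ => by ring

end Conjugation

section PairShuffle

variable {m : ℕ}

lemma mem_pairPartitions {p : Perm (Fin (2 * m))} :
    p ∈ pairPartitions m ↔ (∀ i, p (pairLo i) < p (pairHi i)) ∧ StrictMono fun i => p (pairLo i) :=
  by simp [pairPartitions, StrictMono]

/-- Sends pair `i` to pair `π i`, swapping its two entries when `ε i`. -/
def pairShuffle (ε : Fin m → Bool) (π : Perm (Fin m)) : Perm (Fin (2 * m)) :=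
  (pairEquiv m).symm.permCongr
    ((prodCongrRight fun i => if ε i then swap false true else Equiv.refl Bool).trans
      (prodCongrLeft fun _ => π))

variable (ε : Fin m → Bool) (π : Perm (Fin m))

lemma pairShuffle_pairLo (i : Fin m) :
    pairShuffle ε π (pairLo i) = if ε i then pairHi (π i) else pairLo (π i) := by
  cases h : ε i <;> simp [pairShuffle, h]

lemma pairShuffle_pairHi (i : Fin m) :
    pairShuffle ε π (pairHi i) = if ε i then pairLo (π i) else pairHi (π i) := by
  cases h : ε i <;> simp [pairShuffle, h]

lemma inv_pairShuffle_pairLo (j : Fin m) :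
    (pairShuffle ε π)⁻¹ (pairLo j) = if ε (π⁻¹ j) then pairHi (π⁻¹ j) else pairLo (π⁻¹ j) := by
  rw [Perm.inv_def (pairShuffle ε π), symm_apply_eq]
  cases h : ε (π⁻¹ j) <;> rw [Perm.inv_def] at h <;>
    simp [pairShuffle_pairLo, pairShuffle_pairHi, h]

lemma inv_pairShuffle_pairHi (j : Fin m) :
    (pairShuffle ε π)⁻¹ (pairHi j) = if ε (π⁻¹ j) then pairLo (π⁻¹ j) else pairHi (π⁻¹ j) := by
  rw [Perm.inv_def (pairShuffle ε π), symm_apply_eq]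
  cases h : ε (π⁻¹ j) <;> rw [Perm.inv_def] at h <;>
    simp [pairShuffle_pairLo, pairShuffle_pairHi, h]

lemma sign_pairShuffle : Perm.sign (pairShuffle ε π) = ∏ i, if ε i then -1 else 1 := by
  rw [pairShuffle, Perm.sign_permCongr, ← Perm.mul_def, map_mul, Perm.sign_prodCongrLeft,
    Perm.sign_prodCongrRight, Finset.prod_const, Finset.card_univ, Fintype.card_bool,
    Int.units_sq, one_mul]
  exact Finset.prod_congr rfl fun i _ => by cases ε i <;> simp

end PairShuffle

section Decomposition

variable {m : ℕ} (σ : Perm (Fin (2 * m)))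

def pairMin (i : Fin m) : Fin (2 * m) := min (σ (pairLo i)) (σ (pairHi i))

def pairFlips (i : Fin m) : Bool := decide (σ (pairHi i) < σ (pairLo i))

noncomputable def pairOrder : Perm (Fin m) := (Tuple.sort (pairMin σ))⁻¹

/-- `σ` with each pair listed increasingly and the pairs ordered by their smaller entries. -/
noncomputable def toPairPartition : Perm (Fin (2 * m)) :=
  σ * (pairShuffle (pairFlips σ) (pairOrder σ))⁻¹

lemma pairMin_injective : Function.Injective (pairMin σ) := by
  have pair_of_pairMin : ∀ i, (pairEquiv m (σ⁻¹ (pairMin σ i))).1 = i := fun i => by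
    rcases min_cases (σ (pairLo i)) (σ (pairHi i)) with ⟨h, _⟩ | ⟨h, _⟩ <;> simp [pairMin, h]
  exact fun i j h => (pair_of_pairMin i).symm.trans (h ▸ pair_of_pairMin j)

lemma toPairPartition_pairLo (j : Fin m) :
    toPairPartition σ (pairLo j) = pairMin σ (Tuple.sort (pairMin σ) j) := by
  rw [toPairPartition, Perm.mul_apply, inv_pairShuffle_pairLo, pairOrder, inv_inv]
  by_cases h : σ (pairHi (Tuple.sort (pairMin σ) j)) < σ (pairLo (Tuple.sort (pairMin σ) j))
  · simp [pairFlips, pairMin, h, min_eq_right h.le]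
  · simp [pairFlips, pairMin, h, min_eq_left (not_lt.1 h)]

lemma toPairPartition_pairHi (j : Fin m) :
    toPairPartition σ (pairHi j) =
      max (σ (pairLo (Tuple.sort (pairMin σ) j))) (σ (pairHi (Tuple.sort (pairMin σ) j))) := by
  rw [toPairPartition, Perm.mul_apply, inv_pairShuffle_pairHi, pairOrder, inv_inv]
  by_cases h : σ (pairHi (Tuple.sort (pairMin σ) j)) < σ (pairLo (Tuple.sort (pairMin σ) j))
  · simp [pairFlips, h, max_eq_left h.le]
  · simp [pairFlips, h, max_eq_right (not_lt.1 h)]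

lemma toPairPartition_mem : toPairPartition σ ∈ pairPartitions m := by
  refine mem_pairPartitions.2 ⟨fun i => ?_, fun i j hij => ?_⟩
  · rw [toPairPartition_pairLo, toPairPartition_pairHi]
    exact min_lt_max.2 fun h => (pairLo_lt_pairHi _).ne (σ.injective h)
  · simp only [toPairPartition_pairLo]
    exact (Tuple.monotone_sort _).strictMono_of_injective
      ((pairMin_injective σ).comp (Tuple.sort _).injective) hij

variable {p : Perm (Fin (2 * m))} (hp : p ∈ pairPartitions m) (ε : Fin m → Bool)
  (π : Perm (Fin m))
include hp

lemma pairFlips_mul_pairShuffle : pairFlips (p * pairShuffle ε π) = ε := by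
  funext i
  have := (mem_pairPartitions.1 hp).1 (π i)
  cases h : ε i <;> simp [pairFlips, pairShuffle_pairLo, pairShuffle_pairHi, h, this, this.le]

lemma pairMin_mul_pairShuffle : pairMin (p * pairShuffle ε π) = fun i => p (pairLo (π i)) := by
  funext i
  have := (mem_pairPartitions.1 hp).1 (π i)
  cases h : ε i <;> simp [pairMin, pairShuffle_pairLo, pairShuffle_pairHi, h, this.le]

lemma pairOrder_mul_pairShuffle : pairOrder (p * pairShuffle ε π) = π := by
  have mono := (mem_pairPartitions.1 hp).2
  rw [pairOrder, pairMin_mul_pairShuffle hp, inv_eq_iff_eq_inv, eq_comm, Tuple.eq_sort_iff]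
  refine ⟨fun i j hij => ?_, fun i j hij heq => absurd (mono.injective (by simpa using heq)) hij.ne⟩
  simpa using mono.monotone hij

end Decomposition

noncomputable def pairPartitionsProdEquiv (m : ℕ) :
    {p // p ∈ pairPartitions m} × (Fin m → Bool) × Perm (Fin m) ≃ Perm (Fin (2 * m)) where
  toFun x := x.1.1 * pairShuffle x.2.1 x.2.2
  invFun σ := (⟨toPairPartition σ, toPairPartition_mem σ⟩, pairFlips σ, pairOrder σ)
  left_inv := by
    rintro ⟨⟨p, hp⟩, ε, π⟩
    simp [toPairPartition, pairFlips_mul_pairShuffle hp, pairOrder_mul_pairShuffle hp]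
  right_inv σ := by simp [toPairPartition]

section Skew

variable {m : ℕ} {R : Type*} [CommRing R] {A : Matrix (Fin (2 * m)) (Fin (2 * m)) R}

lemma pairMonomial_comp_pairShuffle (hA : Aᵀ = -A) (τ : Fin (2 * m) → Fin (2 * m))
    (ε : Fin m → Bool) (π : Perm (Fin m)) :
    pairMonomial A (τ ∘ pairShuffle ε π) = Perm.sign (pairShuffle ε π) • pairMonomial A τ := by
  have flip : ∀ i, A (τ ((pairShuffle ε π) (pairLo i))) (τ ((pairShuffle ε π) (pairHi i))) =
      (if ε i then -1 else 1 : ℤˣ) • A (τ (pairLo (π i))) (τ (pairHi (π i))) := fun i => by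
    have skew : ∀ x y, A y x = -A x y := fun x y => congr_fun₂ hA x y
    cases h : ε i
    · simp [pairShuffle_pairLo, pairShuffle_pairHi, h]
    · simpa [pairShuffle_pairLo, pairShuffle_pairHi, h] using skew _ _
  simp only [pairMonomial, Function.comp_apply, flip, Finset.prod_smul, sign_pairShuffle]
  rw [Equiv.prod_comp π fun j => A (τ (pairLo j)) (τ (pairHi j))]

lemma sign_smul_pairMonomial_mul_pairShuffle (hA : Aᵀ = -A) (σ : Perm (Fin (2 * m)))
    (ε : Fin m → Bool) (π : Perm (Fin m)) :
    Perm.sign (σ * pairShuffle ε π) • pairMonomial A ⇑(σ * pairShuffle ε π) =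
      Perm.sign σ • pairMonomial A σ := by
  rw [Perm.coe_mul, pairMonomial_comp_pairShuffle hA, smul_smul, map_mul, mul_assoc,
    Int.units_mul_self, mul_one]

lemma permPfaffian_eq_nsmul_pfaffian (hA : Aᵀ = -A) :
    permPfaffian A = (2 ^ m * m.factorial) • pfaffian A := by
  rw [permPfaffian, ← (pairPartitionsProdEquiv m).sum_comp, Fintype.sum_prod_type]
  simp only [pairPartitionsProdEquiv, coe_fn_mk, sign_smul_pairMonomial_mul_pairShuffle hA,
    Finset.sum_const, Finset.card_univ, Fintype.card_prod, Fintype.card_fun, Fintype.card_bool,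
    Fintype.card_perm, Fintype.card_fin, ← Finset.smul_sum]
  rw [Finset.sum_coe_sort (pairPartitions m) fun p => Perm.sign p • pairMonomial A p, pfaffian]
  simp only [pairMonomial, List.prod_ofFn, Units.smul_def]

end Skew

theorem pfaffian_transpose_mul_mul {m : ℕ} {R : Type*} [CommRing R] [IsAddTorsionFree R]
    (U A : Matrix (Fin (2 * m)) (Fin (2 * m)) R) (hA : Aᵀ = -A) :
    pfaffian (Uᵀ * A * U) = U.det * pfaffian A := by
  have hUAU : (Uᵀ * A * U)ᵀ = -(Uᵀ * A * U) := by
    simp [transpose_mul, hA, Matrix.mul_assoc]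
  refine nsmul_right_injective (by positivity : 2 ^ m * m.factorial ≠ 0) ?_
  dsimp only
  rw [← permPfaffian_eq_nsmul_pfaffian hUAU, ← mul_smul_comm, ← permPfaffian_eq_nsmul_pfaffian hA,
    permPfaffian_transpose_mul_mul]

theorem euler_form_well_defined_general {R : Type*} [CommRing R] [Algebra ℝ R] {m : ℕ}
    (Ω Ω' U : Matrix (Fin (2 * m)) (Fin (2 * m)) R)
    (hdet : U.det = 1)
    (hΩ' : Ω' = Uᵀ * Ω * U) :
    (((2 * Real.pi) ^ (2 * m))⁻¹ : ℝ) • pfaffian (((2 : ℝ)⁻¹) • (Ω' - Ω'ᵀ)) =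
      (((2 * Real.pi) ^ (2 * m))⁻¹ : ℝ) • pfaffian (((2 : ℝ)⁻¹) • (Ω - Ωᵀ)) := by
  have : IsAddTorsionFree R := .of_isTorsionFree ℝ R
  have hskew : ((2 : ℝ)⁻¹ • (Ω - Ωᵀ))ᵀ = -((2 : ℝ)⁻¹ • (Ω - Ωᵀ)) := by
    rw [transpose_smul, transpose_sub, transpose_transpose, ← smul_neg, neg_sub]
  have hconj : (2 : ℝ)⁻¹ • (Ω' - Ω'ᵀ) = Uᵀ * ((2 : ℝ)⁻¹ • (Ω - Ωᵀ)) * U := by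
    simp [hΩ', transpose_mul, Matrix.mul_sub, Matrix.sub_mul, Matrix.mul_assoc]
  rw [hconj, pfaffian_transpose_mul_mul U _ hskew, hdet, one_mul]

/-- The local expression `(2π)^{-n} Pf((Ω - Ωᵀ)/2)` (with `n = 2m`) for the Euler form of an
arbitrary linear connection, computed in positively oriented `g`-orthonormal frames, is invariant
under a change of frame: if the curvature matrix transforms as `Ω ↦ Uᵀ Ω U` with `U ∈ SO(2m)`
(entries of all matrices lying in the commutative algebra of even-degree differential forms),
the two local expressions agree, hence they glue to a global form. -/
theorem euler_form_well_defined {R : Type*} [CommRing R] [Algebra ℝ R] {m : ℕ}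
    (Ω Ω' U : Matrix (Fin (2 * m)) (Fin (2 * m)) R)
    (hU : Uᵀ * U = 1)
    (hdet : U.det = 1)
    (hΩ' : Ω' = Uᵀ * Ω * U) :
    (((2 * Real.pi) ^ (2 * m))⁻¹ : ℝ) • pfaffian (((2 : ℝ)⁻¹) • (Ω' - Ω'ᵀ)) =
      (((2 * Real.pi) ^ (2 * m))⁻¹ : ℝ) • pfaffian (((2 : ℝ)⁻¹) • (Ω - Ωᵀ)) :=
  euler_form_well_defined_general Ω Ω' U hdet hΩ'
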